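/- arXiv:2512.03384 — 11 statements merged into one kernel-verified Lean document; each statement's English description precedes it below -/
import Mathlib

section
/- If (X, ∘, \_∘, •, /_•) is an involutive birack, then the left quasigroup (X, ∘, \_∘) is non-degenerate and right cyclic. -/
/-- If `(X, ∘, \_∘, •, /_•)` is a (finite) involutive birack, then the left quasigroup
`(X, ∘, \_∘)` is non-degenerate and right cyclic. -/
theorem involutive_birack_nondeg_right_cyclic {X : Type*} [Fintype X]
    (op bs bl rd : X → X → X)
    (hl1 : ∀ x y, op x (bs x y) = y) (hl2 : ∀ x y, bs x (op x y) = y)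
    (hr1 : ∀ x y, bl (rd y x) x = y) (hr2 : ∀ x y, rd (bl y x) x = y)
    (hb1 : ∀ x y z, op x (op y z) = op (op x y) (op (bl x y) z))
    (hb2 : ∀ x y z, bl (op x y) (op (bl x y) z) = op (bl x (op y z)) (bl y z))
    (hb3 : ∀ x y z, bl (bl x y) z = bl (bl x (op y z)) (bl y z))
    (hi1 : ∀ x y, op (op x y) (bl x y) = x)
    (hi2 : ∀ x y, bl (op x y) (bl x y) = y) :
    Function.Bijective (fun x => bs x x) ∧
      (∀ x y z, bs (bs x y) (bs x z) = bs (bs y x) (bs y z)) := by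
  -- key identity: bl x y = bs (op x y) x
  have hkey : ∀ x y, bl x y = bs (op x y) x := by
    intro x y
    have h := congrArg (bs (op x y)) (hi1 x y)
    rwa [hl2] at h
  -- symmetric identity
  have hA : ∀ x y z, op x (op (bs x y) z) = op y (op (bs y x) z) := by
    intro x y z
    have h := hb1 x (bs x y) z
    rw [hl1, hkey, hl1] at h
    exact h
  constructor
  · -- bijective: injective with left inverse t ↦ rd t t, then Fintype
    have hinv : ∀ x, rd (bs x x) (bs x x) = x := by
      intro x
      have hbl : bl x (bs x x) = bs x x := by
        rw [hkey, hl1]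
      have h := hr2 (bs x x) x
      rwa [hbl] at h
    have hinj : Function.Injective (fun x => bs x x) := by
      intro a b hab
      simp only at hab
      rw [← hinv a, ← hinv b, hab]
    exact Finite.injective_iff_bijective.mp hinj
  · intro x y z
    have h := hA x y (bs (bs x y) (bs x z))
    rw [hl1, hl1] at h
    -- h : z = op y (op (bs y x) (bs (bs x y) (bs x z)))
    have h2 := congrArg (bs y) h
    rw [hl2] at h2
    -- h2 : bs y z = op (bs y x) (bs (bs x y) (bs x z))
    have h3 := congrArg (bs (bs y x)) h2
    rw [hl2] at h3
    exact h3.symm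
end

section
/- Let (X, ∘, \_∘) be a non-degenerate right cyclic left quasigroup (X finite). Define x • y = (x ∘ y) \_∘ x and x /_• y = R_y^{-1}(x) where R_y(x) = x • y. Then (X, ∘, \_∘, •, /_•) is an involutive birack. -/
/-- From a finite non-degenerate right cyclic left quasigroup `(X, ∘, \_∘)`, setting
`x • y = (x ∘ y) \_∘ x` and `x /_• y = R_y⁻¹(x)`, one obtains an involutive birack. -/
theorem nondeg_right_cyclic_gives_involutive_birack {X : Type*} [Fintype X]
    (op bs : X → X → X)
    (hl1 : ∀ x y, op x (bs x y) = y) (hl2 : ∀ x y, bs x (op x y) = y)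
    (hnd : Function.Bijective (fun x => bs x x))
    (hrc : ∀ x y z, bs (bs x y) (bs x z) = bs (bs y x) (bs y z)) :
    ∃ rd : X → X → X,
      (let bl : X → X → X := fun x y => bs (op x y) x
       -- rd y = R_y⁻¹, i.e. (X, •, /_•) is a right quasigroup
       (∀ x y, bl (rd y x) x = y) ∧ (∀ x y, rd (bl y x) x = y) ∧
       -- birack axioms
       (∀ x y z, op x (op y z) = op (op x y) (op (bl x y) z)) ∧
       (∀ x y z, bl (op x y) (op (bl x y) z) = op (bl x (op y z)) (bl y z)) ∧
       (∀ x y z, bl (bl x y) z = bl (bl x (op y z)) (bl y z)) ∧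
       -- involutivity
       (∀ x y, op (op x y) (bl x y) = x) ∧
       (∀ x y, bl (op x y) (bl x y) = y)) := by
  classical
  set bl : X → X → X := fun x y => bs (op x y) x with hbl
  set D : X ≃ X := Equiv.ofBijective (fun x => bs x x) hnd with hDdef
  have hD : ∀ t, D t = bs t t := fun t => rfl
  -- key identity: D (bl y x) = bs x (D y)
  have hbl2 : ∀ x y, bl x y = bs (op x y) x := fun _ _ => rfl
  have key : ∀ y x, D (bl y x) = bs x (D y) := by
    intro y x
    have h := hrc (op y x) y y
    rw [hl2] at h
    simpa [hD, hbl2] using h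
  set rd : X → X → X := fun w x => D.symm (op x (D w)) with hrd
  -- right quasigroup axioms
  have p1 : ∀ x y, bl (rd y x) x = y := by
    intro x y
    apply D.injective
    rw [key, hrd]
    simp [hl2]
  have p2 : ∀ x y, rd (bl y x) x = y := by
    intro x y
    rw [hrd]
    simp only [key, hl1]
    exact D.symm_apply_apply y
  -- birack axiom 2
  have p3 : ∀ x y z, op x (op y z) = op (op x y) (op (bl x y) z) := by
    intro x y z
    set a := op x y with ha
    set w := op a (op (bs a x) z) with hw
    have h1 : bs (bs a x) (bs a w) = z := by rw [hw, hl2, hl2]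
    have h2 : bs (bs x a) (bs x w) = z := by rw [hrc x a w, h1]
    have h3 : op (bs x a) z = bs x w := by rw [← h2, hl1]
    have h4 : bl x y = bs a x := by rw [hbl2]
    calc op x (op y z) = op x (op (bs x a) z) := by rw [ha, hl2]
      _ = op x (bs x w) := by rw [h3]
      _ = w := hl1 x w
      _ = op (op x y) (op (bl x y) z) := by rw [h4, ← ha, hw]
  -- common setup for axioms 3 and 4
  have p4 : ∀ x y z, bl (op x y) (op (bl x y) z) = op (bl x (op y z)) (bl y z) := by
    intro x y z
    set a := op x y with ha
    set p := op a (op (bs a x) z) with hp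
    have hz : bs (bs a x) (bs a p) = z := by rw [hp, hl2, hl2]
    have hy : y = bs x a := by rw [ha, hl2]
    have hyz : op y z = bs x p := by
      rw [← hz, ← hrc x a p, hy, hl1]
    have hblxy : bl x y = bs a x := by rw [hbl2]
    have hu : op (bl x y) z = bs a p := by rw [hblxy, ← hz, hl1]
    have hLHS : bl (op x y) (op (bl x y) z) = bs p a := by
      rw [← ha, hu, hbl2]
      simp only [hl1]
    have hblyz : bl y z = bs (bs p x) (bs p a) := by
      rw [hbl2, hyz, ← hrc x p a, ← hy]
    have hblxv : bl x (op y z) = bs p x := by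
      rw [hyz, hbl2, hl1]
    rw [hLHS, hblxv, hblyz, hl1]
  have p5 : ∀ x y z, bl (bl x y) z = bl (bl x (op y z)) (bl y z) := by
    intro x y z
    set a := op x y with ha
    set p := op a (op (bs a x) z) with hp
    have hz : bs (bs a x) (bs a p) = z := by rw [hp, hl2, hl2]
    have hy : y = bs x a := by rw [ha, hl2]
    have hyz : op y z = bs x p := by
      rw [← hz, ← hrc x a p, hy, hl1]
    have hblxy : bl x y = bs a x := by rw [hbl2]
    have hblyz : bl y z = bs (bs p x) (bs p a) := by
      rw [hbl2, hyz, ← hrc x p a, ← hy]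
    have hblxv : bl x (op y z) = bs p x := by
      rw [hyz, hbl2, hl1]
    have hLHS : bl (bl x y) z = bs (bs p a) (bs p x) := by
      rw [hblxy, hbl2, ← hz, hl1, hrc a p x]
    rw [hLHS, hblxv, hblyz, hbl2, hl1]
  have p6 : ∀ x y, op (op x y) (bl x y) = x := by
    intro x y; rw [hbl2]; exact hl1 _ _
  have p7 : ∀ x y, bl (op x y) (bl x y) = y := by
    intro x y
    rw [hbl2 (op x y), p6, hl2]
  exact ⟨rd, p1, p2, p3, p4, p5, p6, p7⟩
end

section
/- In an involutive birack (X, ∘, \_∘, •, /_•), the identities (x \_∘ x) /_• (x \_∘ x) = x and (x /_• x) \_∘ (x /_• x) = x hold for all x ∈ X. -/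
/-- In an involutive birack, `(x \_∘ x) /_• (x \_∘ x) = x` and
`(x /_• x) \_∘ (x /_• x) = x` for all `x`. -/
theorem involutive_birack_diagonal_identities {X : Type*}
    (op bs bl rd : X → X → X)
    (hl1 : ∀ x y, op x (bs x y) = y) (hl2 : ∀ x y, bs x (op x y) = y)
    (hr1 : ∀ x y, bl (rd y x) x = y) (hr2 : ∀ x y, rd (bl y x) x = y)
    (hb1 : ∀ x y z, op x (op y z) = op (op x y) (op (bl x y) z))
    (hb2 : ∀ x y z, bl (op x y) (op (bl x y) z) = op (bl x (op y z)) (bl y z))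
    (hb3 : ∀ x y z, bl (bl x y) z = bl (bl x (op y z)) (bl y z))
    (hi1 : ∀ x y, op (op x y) (bl x y) = x)
    (hi2 : ∀ x y, bl (op x y) (bl x y) = y) :
    ∀ x : X, rd (bs x x) (bs x x) = x ∧ bs (rd x x) (rd x x) = x := by
  intro x
  constructor
  · set t := bs x x with ht
    have hxt : op x t = x := hl1 x x
    have h1 : op x (bl x t) = x := by
      have := hi1 x t; rwa [hxt] at this
    have h2 : bl x t = t := by
      have := congrArg (bs x) (h1.trans hxt.symm)
      rwa [hl2, hl2] at this
    calc rd t t = rd (bl x t) t := by rw [h2]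
      _ = x := hr2 t x
  · set s := rd x x with hs
    have hsx : bl s x = x := hr1 x x
    have h1 : bl (op s x) x = x := by
      have := hi2 s x; rwa [hsx] at this
    have h2 : op s x = s := by
      have := congrArg (rd · x) (h1.trans hsx.symm)
      simpa [hr2] using this
    calc bs s s = bs s (op s x) := by rw [h2]
      _ = x := hl2 s x
end

section
/- An involutive birack (X, ∘, \_∘, •, /_•) satisfies condition lri (i.e., (x ∘ y) • x = y and x ∘ (y • x) = y for all x, y) if and only if (x ∘ y) \_∘ x = y \_∘ x for all x, y ∈ X. -/
/-- An involutive birack satisfies condition lri iff `(x ∘ y) \_∘ x = y \_∘ x` for all `x, y`. -/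
theorem lri_iff {X : Type*}
    (op bs bl rd : X → X → X)
    (hl1 : ∀ x y, op x (bs x y) = y) (hl2 : ∀ x y, bs x (op x y) = y)
    (hr1 : ∀ x y, bl (rd y x) x = y) (hr2 : ∀ x y, rd (bl y x) x = y)
    (hb1 : ∀ x y z, op x (op y z) = op (op x y) (op (bl x y) z))
    (hb2 : ∀ x y z, bl (op x y) (op (bl x y) z) = op (bl x (op y z)) (bl y z))
    (hb3 : ∀ x y z, bl (bl x y) z = bl (bl x (op y z)) (bl y z))
    (hi1 : ∀ x y, op (op x y) (bl x y) = x)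
    (hi2 : ∀ x y, bl (op x y) (bl x y) = y) :
    ((∀ x y, bl (op x y) x = y) ∧ (∀ x y, op x (bl y x) = y)) ↔
      (∀ x y, bs (op x y) x = bs y x) := by
  have key : ∀ x y, bs (op x y) x = bl x y := by
    intro x y
    have h := hl2 (op x y) (bl x y)
    rwa [hi1] at h
  constructor
  · rintro ⟨_, h2⟩ x y
    have h := hl2 y (bl x y)
    rw [h2] at h
    rw [key, h]
  · intro h
    have key2 : ∀ x y, bl x y = bs y x := by
      intro x y; rw [← key, h]
    exact ⟨fun x y => by rw [key2, hl2], fun x y => by rw [key2, hl1]⟩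
end

section
/- Let (X, ∘, \_∘) be a non-degenerate ℕ^p-graded left quasigroup and φ = {φ_s} a sequence of commuting degree-preserving bijections of X. Then the φ-isotope (X, *, \_*), with x * y = x ∘ φ^{|x|}(y) and x \_* y = φ^{-|x|}(x \_∘ y), is also non-degenerate, i.e., x ↦ x \_* x is a bijection of X. -/
/-- The φ-isotope of a non-degenerate ℕ^p-graded left quasigroup by commuting
degree-preserving bijections is again non-degenerate. -/
theorem isotope_nondegenerate {X : Type*} {p : ℕ}
    (op bs : X → X → X) (deg : X → Fin p)
    (hl1 : ∀ x y, op x (bs x y) = y) (hl2 : ∀ x y, bs x (op x y) = y)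
    (hgr : ∀ x y, deg (op x y) = deg y)
    (hnd : Function.Bijective (fun x => bs x x))
    (φ : Fin p → X ≃ X)
    (hdegpres : ∀ s x, deg (φ s x) = deg x)
    (hcomm : ∀ s t x, φ s (φ t x) = φ t (φ s x)) :
    letI bsStar : X → X → X := fun x y => (φ (deg x)).symm (bs x y)
    Function.Bijective (fun x => bsStar x x) := by
  have hdegbs : ∀ x y, deg (bs x y) = deg y := by
    intro x y
    calc deg (bs x y) = deg (op x (bs x y)) := (hgr x (bs x y)).symm
    _ = deg y := by rw [hl1]
  have hdegsymm : ∀ s x, deg ((φ s).symm x) = deg x := by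
    intro s x
    rw [← hdegpres s ((φ s).symm x), Equiv.apply_symm_apply]
  constructor
  · intro a b h
    simp only at h
    have hd : deg a = deg b := by
      have := congrArg deg h
      rwa [hdegsymm, hdegsymm, hdegbs, hdegbs] at this
    apply hnd.1
    have := congrArg (φ (deg a)) h
    rw [Equiv.apply_symm_apply, hd, Equiv.apply_symm_apply] at this
    exact this
  · intro z
    obtain ⟨x, hx⟩ := hnd.2 (φ (deg z) z)
    simp only at hx
    refine ⟨x, ?_⟩
    have hdx : deg x = deg z := by
      rw [← hdegbs x x, hx, hdegpres]
    simp only [hdx, hx, Equiv.symm_apply_apply]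
end

section
/- Let (X, ∘, \_∘) be an ℕ^p-graded right cyclic left quasigroup, and φ = {φ_s : s=1,…,p} a sequence of commuting ℕ^p-graded automorphisms of (X, ∘, \_∘) satisfying L_{φ_s(x)} = L_x for all s and all x ∈ X. Then the φ-isotope (X, *, \_*) with x * y = x ∘ φ^{|x|}(y), x \_* y = φ^{-|x|}(x \_∘ y) is also right cyclic: (x \_* y) \_* (x \_* z) = (y \_* x) \_* (y \_* z) for all x, y, z. -/
/-- The φ-isotope of an ℕ^p-graded right cyclic left quasigroup by commuting
ℕ^p-graded automorphisms satisfying `L_{φ_s(x)} = L_x` is again right cyclic. -/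
theorem isotope_right_cyclic {X : Type*} {p : ℕ}
    (op bs : X → X → X) (deg : X → Fin p)
    (hl1 : ∀ x y, op x (bs x y) = y) (hl2 : ∀ x y, bs x (op x y) = y)
    (hgr : ∀ x y, deg (op x y) = deg y)
    (hrc : ∀ x y z, bs (bs x y) (bs x z) = bs (bs y x) (bs y z))
    (φ : Fin p → X ≃ X)
    (haut : ∀ s x y, φ s (op x y) = op (φ s x) (φ s y))
    (hdegpres : ∀ s x, deg (φ s x) = deg x)
    (hcomm : ∀ s t x, φ s (φ t x) = φ t (φ s x))
    (hL : ∀ s x a, op (φ s x) a = op x a) :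
    letI bsStar : X → X → X := fun x y => (φ (deg x)).symm (bs x y)
    ∀ x y z, bsStar (bsStar x y) (bsStar x z) = bsStar (bsStar y x) (bsStar y z) := by
  have hbs_aut : ∀ s a b, φ s (bs a b) = bs (φ s a) (φ s b) := by
    intro s a b
    calc φ s (bs a b) = bs (φ s a) (op (φ s a) (φ s (bs a b))) := (hl2 _ _).symm
      _ = bs (φ s a) (φ s (op a (bs a b))) := by rw [haut]
      _ = bs (φ s a) (φ s b) := by rw [hl1]
  have hbs_aut' : ∀ s a b, (φ s).symm (bs a b) = bs ((φ s).symm a) ((φ s).symm b) := by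
    intro s a b
    apply (φ s).injective
    rw [Equiv.apply_symm_apply, hbs_aut, Equiv.apply_symm_apply, Equiv.apply_symm_apply]
  have hdeg_symm : ∀ s a, deg ((φ s).symm a) = deg a := by
    intro s a
    conv_rhs => rw [← Equiv.apply_symm_apply (φ s) a, hdegpres]
  have hdeg_bs : ∀ a b, deg (bs a b) = deg b := by
    intro a b
    conv_rhs => rw [← hl1 a b, hgr]
  have hcomm' : ∀ s t a, (φ s).symm ((φ t).symm a) = (φ t).symm ((φ s).symm a) := by
    intro s t a
    apply (φ t).injective; apply (φ s).injective
    rw [hcomm]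
    simp
  intro x y z
  show (φ (deg ((φ (deg x)).symm (bs x y)))).symm
      (bs ((φ (deg x)).symm (bs x y)) ((φ (deg x)).symm (bs x z)))
    = (φ (deg ((φ (deg y)).symm (bs y x)))).symm
      (bs ((φ (deg y)).symm (bs y x)) ((φ (deg y)).symm (bs y z)))
  rw [hdeg_symm, hdeg_symm, hdeg_bs, hdeg_bs, ← hbs_aut', ← hbs_aut', hrc, hcomm']
end

section
/- Let (X, ∘, \_∘, •, /_•) be an ℕ^p-graded involutive birack satisfying condition lri, and φ = {φ_s} a sequence of commuting graded automorphisms satisfying L_{φ_s(x)} = L_x for all s and x. Then the φ-isotope (X, *, \_*, ⋄, /_⋄), determined by x * y = L_x(φ^{|x|}(y)) and x ⋄ y = (x * y) \_* x, is also an ℕ^p-graded involutive birack satisfying condition lri. -/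
/-- The φ-isotope of an ℕ^p-graded involutive birack satisfying condition lri, by
commuting graded automorphisms with `L_{φ_s(x)} = L_x`, is again an ℕ^p-graded
involutive birack satisfying condition lri. -/
theorem isotope_involutive_birack_lri {X : Type*} {p : ℕ} [Fintype X]
    (op bs bl rd : X → X → X) (deg : X → Fin p)
    (hl1 : ∀ x y, op x (bs x y) = y) (hl2 : ∀ x y, bs x (op x y) = y)
    (hr1 : ∀ x y, bl (rd y x) x = y) (hr2 : ∀ x y, rd (bl y x) x = y)
    (hb1 : ∀ x y z, op x (op y z) = op (op x y) (op (bl x y) z))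
    (hb2 : ∀ x y z, bl (op x y) (op (bl x y) z) = op (bl x (op y z)) (bl y z))
    (hb3 : ∀ x y z, bl (bl x y) z = bl (bl x (op y z)) (bl y z))
    (hi1 : ∀ x y, op (op x y) (bl x y) = x)
    (hi2 : ∀ x y, bl (op x y) (bl x y) = y)
    (hgr1 : ∀ x y, deg (op x y) = deg y) (hgr2 : ∀ x y, deg (bl y x) = deg y)
    (hlri1 : ∀ x y, bl (op x y) x = y) (hlri2 : ∀ x y, op x (bl y x) = y)
    (φ : Fin p → X ≃ X)
    (haut : ∀ s x y, φ s (op x y) = op (φ s x) (φ s y))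
    (hdegpres : ∀ s x, deg (φ s x) = deg x)
    (hcomm : ∀ s t x, φ s (φ t x) = φ t (φ s x))
    (hL : ∀ s x a, op (φ s x) a = op x a) :
    letI star : X → X → X := fun x y => op x (φ (deg x) y)
    letI bsStar : X → X → X := fun x y => (φ (deg x)).symm (bs x y)
    letI diamond : X → X → X := fun x y => bsStar (star x y) x
    ∃ rdD : X → X → X,
      -- left and right quasigroup structures
      (∀ x y, star x (bsStar x y) = y) ∧ (∀ x y, bsStar x (star x y) = y) ∧
      (∀ x y, diamond (rdD y x) x = y) ∧ (∀ x y, rdD (diamond y x) x = y) ∧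
      -- birack axioms
      (∀ x y z, star x (star y z) = star (star x y) (star (diamond x y) z)) ∧
      (∀ x y z, diamond (star x y) (star (diamond x y) z)
          = star (diamond x (star y z)) (diamond y z)) ∧
      (∀ x y z, diamond (diamond x y) z
          = diamond (diamond x (star y z)) (diamond y z)) ∧
      -- involutivity
      (∀ x y, star (star x y) (diamond x y) = x) ∧
      (∀ x y, diamond (star x y) (diamond x y) = y) ∧
      -- ℕ^p-grading
      (∀ x y, deg (star x y) = deg y) ∧ (∀ x y, deg (diamond y x) = deg y) ∧
      -- condition lri
      (∀ x y, diamond (star x y) x = y) ∧ (∀ x y, star x (diamond y x) = y) := by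
  -- bs and bl are flips of each other (from lri)
  have hA : ∀ x a, bs x a = bl a x := by
    intro x a
    have h := hl2 x (bl a x)
    rwa [hlri2] at h
  -- L-invariance for bs
  have hC : ∀ s x a, bs (φ s x) a = bs x a := by
    intro s x a
    calc bs (φ s x) a = bs (φ s x) (op x (bs x a)) := by rw [hl1]
      _ = bs (φ s x) (op (φ s x) (bs x a)) := by rw [hL]
      _ = bs x a := hl2 _ _
  have hbl2 : ∀ s a x, bl a (φ s x) = bl a x := by
    intro s a x; rw [← hA, ← hA, hC]
  have hautbs : ∀ s x a, φ s (bs x a) = bs (φ s x) (φ s a) := by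
    intro s x a
    have h : bs (φ s x) (φ s a) = bs (φ s x) (φ s (op x (bs x a))) := by rw [hl1]
    rw [haut, hl2] at h
    exact h.symm
  have hautbl : ∀ s a x, φ s (bl a x) = bl (φ s a) (φ s x) := by
    intro s a x; rw [← hA, ← hA, hautbs]
  have hsymm_op : ∀ s x y, (φ s).symm (op x y) = op ((φ s).symm x) ((φ s).symm y) := by
    intro s x y
    apply (φ s).injective
    rw [Equiv.apply_symm_apply, haut, Equiv.apply_symm_apply, Equiv.apply_symm_apply]
  have hsymm_bl : ∀ s x y, (φ s).symm (bl x y) = bl ((φ s).symm x) ((φ s).symm y) := by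
    intro s x y
    apply (φ s).injective
    rw [Equiv.apply_symm_apply, hautbl, Equiv.apply_symm_apply, Equiv.apply_symm_apply]
  have hLs : ∀ s x a, op ((φ s).symm x) a = op x a := by
    intro s x a
    conv_rhs => rw [← Equiv.apply_symm_apply (φ s) x]
    rw [hL]
  have hbl2s : ∀ s a x, bl a ((φ s).symm x) = bl a x := by
    intro s a x
    conv_rhs => rw [← Equiv.apply_symm_apply (φ s) x, hbl2]
  have hdegs : ∀ s x, deg ((φ s).symm x) = deg x := by
    intro s x
    conv_rhs => rw [← Equiv.apply_symm_apply (φ s) x, hdegpres]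
  have hD : ∀ x u, bl x (op x u) = bl x u := by
    intro x u
    rw [← hA]
    calc bs (op x u) x = bs (op x u) (op (op x u) (bl x u)) := by rw [hi1]
      _ = bl x u := hl2 _ _
  have hcs : ∀ s t x, φ s ((φ t).symm x) = (φ t).symm (φ s x) := by
    intro s t x
    apply (φ t).injective
    rw [Equiv.apply_symm_apply, ← hcomm, Equiv.apply_symm_apply]
  have hcss : ∀ s t x, (φ s).symm ((φ t).symm x) = (φ t).symm ((φ s).symm x) := by
    intro s t x
    apply (φ s).injective
    rw [Equiv.apply_symm_apply, hcs, Equiv.apply_symm_apply]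
  have hbl1s : ∀ s a b, bl ((φ s).symm a) b = (φ s).symm (bl a b) := by
    intro s a b
    rw [hsymm_bl, hbl2s]
  -- closed form for diamond
  have hdia : ∀ x y, (φ (deg (op x (φ (deg x) y)))).symm (bs (op x (φ (deg x) y)) x)
      = (φ (deg y)).symm (bl x y) := by
    intro x y
    rw [hgr1, hdegpres, hA, hD, hbl2]
  refine ⟨fun y x => rd (φ (deg x) y) x, ?_, ?_, ?_, ?_, ?_, ?_, ?_, ?_, ?_, ?_, ?_, ?_, ?_⟩
  · intro x y
    dsimp only
    rw [Equiv.apply_symm_apply, hl1]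
  · intro x y
    dsimp only
    rw [hl2, Equiv.symm_apply_apply]
  · intro x y
    dsimp only
    rw [hdia, hr1, Equiv.symm_apply_apply]
  · intro x y
    dsimp only
    rw [hdia, Equiv.apply_symm_apply, hr2]
  · intro x y z
    dsimp only
    rw [hdia, hgr1, hdegpres, hdegs, hgr2]
    conv_rhs => rw [hLs, haut, hL, hcomm (deg y) (deg x) z, ← hbl2 (deg x) x y, ← hb1]
    rw [haut]
  · intro x y z
    dsimp only
    simp only [hdia]
    simp only [hgr1, hgr2, hdegpres, hdegs]
    conv_lhs => rw [hLs, ← hbl2 (deg x) x y, hb2, ← haut, hbl2, hbl2 (deg x) (φ (deg x) y) z,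
      hsymm_op]
    conv_rhs => rw [← hL (deg y) y (φ (deg y) z), ← haut, hbl2, hcs, hautbl, hbl2]
  · intro x y z
    dsimp only
    simp only [hdia]
    simp only [hgr1, hgr2, hdegpres, hdegs]
    conv_lhs => rw [hbl1s]
    conv_rhs => rw [← hL (deg y) y (φ (deg y) z), ← haut, hbl2, ← hsymm_bl, ← hb3, hcss]
  · intro x y
    dsimp only
    rw [hdia, hgr1, hdegpres, Equiv.apply_symm_apply, ← hbl2 (deg x) x y, hi1]
  · intro x y
    dsimp only
    simp only [hdia]
    simp only [hgr1, hgr2, hdegpres, hdegs]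
    rw [hbl2s, ← hbl2 (deg x) x y, hi2, Equiv.symm_apply_apply]
  · intro x y
    dsimp only
    rw [hgr1, hdegpres]
  · intro x y
    dsimp only
    rw [hdia, hdegs, hgr2]
  · intro x y
    dsimp only
    rw [hdia, hlri1, Equiv.symm_apply_apply]
  · intro x y
    dsimp only
    rw [hdia, Equiv.apply_symm_apply, hlri2]
end

section
/- Let (X, ∘, \_∘, •, /_•) be an ℕ^p-graded involutive birack satisfying condition lri with associated ℕ^p-graded quadratic algebra A = k⟨X⟩/(xy − (x∘y)(x•y)), and let φ = {φ_s} be commuting graded birack automorphisms with L_{φ_s(x)} = L_x, inducing graded algebra automorphisms of A. Then the algebra A* of the φ-isotope birack (X, *, \_*, ⋄, /_⋄), defined by relations xy = (x*y)(x⋄y), is isomorphic as an ℕ^p-graded algebra to the Zhang twist A^φ of A. -/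
/-- The Yang–Baxter relation of a birack `(X, ∘, •)`: `xy = (x∘y)(x•y)`. -/
def ybRel (k : Type*) [Field k] {X : Type*} (op bl : X → X → X) :
    FreeAlgebra k X → FreeAlgebra k X → Prop :=
  fun a b => ∃ x y : X,
    a = FreeAlgebra.ι k x * FreeAlgebra.ι k y ∧
    b = FreeAlgebra.ι k (op x y) * FreeAlgebra.ι k (bl x y)

/-- The Yang–Baxter algebra `A(X, R) = k⟨X⟩/(xy − (x∘y)(x•y))` of a birack. -/
def ybAlgebra (k : Type*) [Field k] {X : Type*} (op bl : X → X → X) :=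
  RingQuot (ybRel k op bl)

noncomputable instance {k : Type*} [Field k] {X : Type*} (op bl : X → X → X) :
    Ring (ybAlgebra k op bl) := by unfold ybAlgebra; infer_instance

noncomputable instance {k : Type*} [Field k] {X : Type*} (op bl : X → X → X) :
    Algebra k (ybAlgebra k op bl) := by unfold ybAlgebra; infer_instance

/-- The canonical generator `x ∈ X` inside the Yang–Baxter algebra. -/
noncomputable def ybGen (k : Type*) [Field k] {X : Type*} (op bl : X → X → X) (x : X) :
    ybAlgebra k op bl :=
  RingQuot.mkAlgHom k (ybRel k op bl) (FreeAlgebra.ι k x)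

/-!
The maps `x ↦ x · Φ_{deg x}(-)` on `A` satisfy the defining relations of the isotope algebra `A*`
(this is where `x * y = x ∘ φ^{|x|}(y)` and `φ^{|y|}(x ⋄ y) = x • φ^{|x|}(y)` enter), so `A` becomes
an `A*`-module and `T b := b • 1` satisfies `T (x b) = x · Φ_{deg x}(T b)`. Conversely the birack
is the `φ⁻¹`-isotope of its isotope in the same sense, which gives `S : A → A*` the same way. Both
maps are equivariant for the automorphisms induced by `φ`, so `S ∘ T` and `T ∘ S` intertwine the
left regular actions on generators, hence everywhere, and are the identity.
-/
namespace ybAlgebra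

variable {k : Type*} [Field k] {X : Type*} {op bl : X → X → X}

variable (k op bl) in
theorem ybGen_mul_ybGen (x y : X) :
    ybGen k op bl x * ybGen k op bl y = ybGen k op bl (op x y) * ybGen k op bl (bl x y) := by
  have h := RingQuot.mkAlgHom_rel k (s := ybRel k op bl) ⟨x, y, rfl, rfl⟩
  rw [map_mul, map_mul] at h
  exact h

noncomputable def lift {C : Type*} [Semiring C] [Algebra k C] (f : X → C)
    (hf : ∀ x y, f x * f y = f (op x y) * f (bl x y)) : ybAlgebra k op bl →ₐ[k] C :=
  RingQuot.liftAlgHom k ⟨FreeAlgebra.lift k f, by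
    rintro _ _ ⟨x, y, rfl, rfl⟩
    simpa only [map_mul, FreeAlgebra.lift_ι_apply] using hf x y⟩

@[simp]
theorem lift_ybGen {C : Type*} [Semiring C] [Algebra k C] (f : X → C)
    (hf : ∀ x y, f x * f y = f (op x y) * f (bl x y)) (x : X) :
    lift f hf (ybGen k op bl x) = f x :=
  (RingQuot.liftAlgHom_mkAlgHom_apply k _ _ _).trans (FreeAlgebra.lift_ι_apply f x)

theorem algHom_ext {C : Type*} [Semiring C] [Algebra k C] {f g : ybAlgebra k op bl →ₐ[k] C}
    (h : ∀ x, f (ybGen k op bl x) = g (ybGen k op bl x)) : f = g :=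
  RingQuot.ringQuot_ext' k f g (FreeAlgebra.hom_ext (funext h))

@[elab_as_elim]
theorem induction {P : ybAlgebra k op bl → Prop}
    (algebraMap : ∀ r : k, P (algebraMap k _ r)) (ybGen : ∀ x, P (ybGen k op bl x))
    (mul : ∀ a b, P a → P b → P (a * b)) (add : ∀ a b, P a → P b → P (a + b))
    (a : ybAlgebra k op bl) : P a := by
  obtain ⟨u, rfl⟩ := RingQuot.mkAlgHom_surjective k (ybRel k op bl) a
  induction u using FreeAlgebra.induction with
  | grade0 r => rw [AlgHom.commutes]; exact algebraMap r
  | grade1 x => exact ybGen x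
  | mul a b ha hb => rw [map_mul]; exact mul _ _ ha hb
  | add a b ha hb => rw [map_add]; exact add _ _ ha hb

theorem comp_eq_comp_of_ybGen {M N : Type*} [AddCommMonoid M] [Module k M] [AddCommMonoid N]
    [Module k N] (ρ : ybAlgebra k op bl →ₐ[k] Module.End k M)
    (σ : ybAlgebra k op bl →ₐ[k] Module.End k N) (f : M →ₗ[k] N)
    (h : ∀ x, f ∘ₗ ρ (ybGen k op bl x) = σ (ybGen k op bl x) ∘ₗ f) (a : ybAlgebra k op bl) :
    f ∘ₗ ρ a = σ a ∘ₗ f := by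
  induction a using induction with
  | algebraMap r => ext; simp
  | ybGen x => exact h x
  | mul a b ha hb => rw [map_mul, map_mul, Module.End.mul_eq_comp, Module.End.mul_eq_comp,
      ← LinearMap.comp_assoc, ha, LinearMap.comp_assoc, hb, LinearMap.comp_assoc]
  | add a b ha hb => rw [map_add, map_add, LinearMap.comp_add, LinearMap.add_comp, ha, hb]

theorem comm_of_ybGen {f g : ybAlgebra k op bl →ₐ[k] ybAlgebra k op bl} {e e' : X → X}
    (hf : ∀ x, f (ybGen k op bl x) = ybGen k op bl (e x))
    (hg : ∀ x, g (ybGen k op bl x) = ybGen k op bl (e' x)) (he : ∀ x, e (e' x) = e' (e x))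
    (a : ybAlgebra k op bl) : f (g a) = g (f a) :=
  AlgHom.congr_fun (algHom_ext (f := f.comp g) (g := g.comp f) fun x => by simp [hf, hg, he]) a

theorem symm_ybGen {e : X ≃ X} (Φ : ybAlgebra k op bl ≃ₐ[k] ybAlgebra k op bl)
    (h : ∀ x, Φ (ybGen k op bl x) = ybGen k op bl (e x)) (x : X) :
    Φ.symm (ybGen k op bl x) = ybGen k op bl (e.symm x) := by
  rw [AlgEquiv.symm_apply_eq, h, e.apply_symm_apply]

noncomputable def mapEquiv (e : X ≃ X) (hop : ∀ x y, op (e x) (e y) = e (op x y))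
    (hbl : ∀ x y, bl (e x) (e y) = e (bl x y)) : ybAlgebra k op bl ≃ₐ[k] ybAlgebra k op bl :=
  have hsymm : ∀ f : X → X → X, (∀ x y, f (e x) (e y) = e (f x y)) →
      ∀ x y, f (e.symm x) (e.symm y) = e.symm (f x y) := fun f hf x y => by
    rw [e.eq_symm_apply, ← hf, e.apply_symm_apply, e.apply_symm_apply]
  AlgEquiv.ofAlgHom
    (lift (fun x => ybGen k op bl (e x)) fun x y => by rw [ybGen_mul_ybGen, hop, hbl])
    (lift (fun x => ybGen k op bl (e.symm x)) fun x y => by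
      rw [ybGen_mul_ybGen, hsymm op hop, hsymm bl hbl])
    (algHom_ext fun x => by simp) (algHom_ext fun x => by simp)

@[simp]
theorem mapEquiv_ybGen (e : X ≃ X) (hop : ∀ x y, op (e x) (e y) = e (op x y))
    (hbl : ∀ x y, bl (e x) (e y) = e (bl x y)) (x : X) :
    mapEquiv (k := k) e hop hbl (ybGen k op bl x) = ybGen k op bl (e x) :=
  lift_ybGen _ _ x

end ybAlgebra

section Isotope

variable {X ι : Type*} (deg : X → ι) (φ : ι → X ≃ X)

/-- Instead of the paper's formula `x ⋄ y = (x * y) \_* x`, this records only the consequences of it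
that the twisting argument needs (see `isIsotope_isotopeOp_isotopeBl`). -/
structure IsIsotope (op bl op' bl' : X → X → X) : Prop where
  deg_op : ∀ x y, deg (op' x y) = deg y
  deg_bl : ∀ x y, deg (bl' x y) = deg x
  op_eq : ∀ x y, op' x y = op x (φ (deg x) y)
  map_bl : ∀ x y, φ (deg y) (bl' x y) = bl x (φ (deg x) y)

variable {deg φ} {op bs bl op' bl' : X → X → X}

theorem deg_symm_apply (hdeg : ∀ s x, deg (φ s x) = deg x) (s : ι) (x : X) :
    deg ((φ s).symm x) = deg x := by
  rw [← hdeg s, Equiv.apply_symm_apply]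

theorem symm_apply_symm_apply_comm (hcomm : ∀ s t x, φ s (φ t x) = φ t (φ s x)) (s t : ι) (x : X) :
    (φ s).symm ((φ t).symm x) = (φ t).symm ((φ s).symm x) :=
  Equiv.ext_iff.1 (Commute.inv_inv (Equiv.ext (hcomm s t) : Commute (φ s) (φ t))) x

theorem IsIsotope.symm (h : IsIsotope deg φ op bl op' bl') (hdeg : ∀ s x, deg (φ s x) = deg x)
    (hop : ∀ x y, deg (op x y) = deg y) (hbl : ∀ x y, deg (bl x y) = deg x) :
    IsIsotope deg (fun s => (φ s).symm) op' bl' op bl where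
  deg_op := hop
  deg_bl := hbl
  op_eq x y := by rw [h.op_eq, Equiv.apply_symm_apply]
  map_bl x y := by
    rw [Equiv.symm_apply_eq, ← deg_symm_apply hdeg (deg x) y, h.map_bl, Equiv.apply_symm_apply]

theorem bs_op_eq_bl (hl2 : ∀ x y, bs x (op x y) = y) (hi1 : ∀ x y, op (op x y) (bl x y) = x)
    (x y : X) : bs (op x y) x = bl x y := by
  simpa only [hi1] using hl2 (op x y) (bl x y)

theorem bs_map {e : X → X} (hl1 : ∀ x y, op x (bs x y) = y) (hl2 : ∀ x y, bs x (op x y) = y)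
    (he : ∀ x y, e (op x y) = op (e x) (e y)) (x y : X) : bs (e x) (e y) = e (bs x y) := by
  simpa only [← he, hl1] using hl2 (e x) (e (bs x y))

variable (deg φ op bs)

def isotopeOp (x y : X) : X := op x (φ (deg x) y)

def isotopeBl (x y : X) : X :=
  (φ (deg (isotopeOp deg φ op x y))).symm (bs (isotopeOp deg φ op x y) x)

variable {deg φ op bs}

theorem isIsotope_isotopeOp_isotopeBl (hl2 : ∀ x y, bs x (op x y) = y)
    (hi1 : ∀ x y, op (op x y) (bl x y) = x) (hgr1 : ∀ x y, deg (op x y) = deg y)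
    (hgr2 : ∀ x y, deg (bl y x) = deg y) (hdeg : ∀ s x, deg (φ s x) = deg x) :
    IsIsotope deg φ op bl (isotopeOp deg φ op) (isotopeBl deg φ op bs) := by
  have hop : ∀ x y, deg (isotopeOp deg φ op x y) = deg y := fun x y => by
    rw [isotopeOp, hgr1, hdeg]
  have hbs : ∀ x y, bs (isotopeOp deg φ op x y) x = bl x (φ (deg x) y) := fun x y =>
    bs_op_eq_bl hl2 hi1 x _
  refine ⟨hop, fun x y => ?_, fun x y => rfl, fun x y => ?_⟩
  · rw [isotopeBl, ← hdeg (deg (isotopeOp deg φ op x y)), Equiv.apply_symm_apply, hbs, hgr2]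
  · rw [isotopeBl, hop, Equiv.apply_symm_apply, hbs]

theorem isotopeOp_map (haut : ∀ s x y, φ s (op x y) = op (φ s x) (φ s y))
    (hdeg : ∀ s x, deg (φ s x) = deg x) (hcomm : ∀ s t x, φ s (φ t x) = φ t (φ s x))
    (s : ι) (x y : X) :
    isotopeOp deg φ op (φ s x) (φ s y) = φ s (isotopeOp deg φ op x y) := by
  rw [isotopeOp, isotopeOp, hdeg, hcomm, haut]

theorem isotopeBl_map (hl1 : ∀ x y, op x (bs x y) = y) (hl2 : ∀ x y, bs x (op x y) = y)
    (haut : ∀ s x y, φ s (op x y) = op (φ s x) (φ s y))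
    (hdeg : ∀ s x, deg (φ s x) = deg x) (hcomm : ∀ s t x, φ s (φ t x) = φ t (φ s x))
    (s : ι) (x y : X) :
    isotopeBl deg φ op bs (φ s x) (φ s y) = φ s (isotopeBl deg φ op bs x y) := by
  rw [isotopeBl, isotopeBl, isotopeOp_map haut hdeg hcomm, hdeg,
    bs_map hl1 hl2 (haut s), Equiv.symm_apply_eq, hcomm, Equiv.apply_symm_apply]

end Isotope

section ZhangTwist

open ybAlgebra

variable {k : Type*} [Field k] {X ι : Type*} {deg : X → ι} {φ : ι → X ≃ X}
  {op bl op' bl' : X → X → X}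

noncomputable def twistedAction (Φ : ι → ybAlgebra k op bl ≃ₐ[k] ybAlgebra k op bl)
    (hΦ : ∀ s x, Φ s (ybGen k op bl x) = ybGen k op bl (φ s x))
    (hΦcomm : ∀ s t a, Φ s (Φ t a) = Φ t (Φ s a)) (h : IsIsotope deg φ op bl op' bl') :
    ybAlgebra k op' bl' →ₐ[k] Module.End k (ybAlgebra k op bl) :=
  lift (fun x => Algebra.lmul k _ (ybGen k op bl x) * (Φ (deg x)).toLinearMap) fun x y => by
    ext c
    change ybGen k op bl x * Φ (deg x) (ybGen k op bl y * Φ (deg y) c) =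
      ybGen k op bl (op' x y) * Φ (deg (op' x y)) (ybGen k op bl (bl' x y) * Φ (deg (bl' x y)) c)
    rw [h.deg_op, h.deg_bl, map_mul, map_mul, hΦ, hΦ, h.map_bl, h.op_eq, hΦcomm, ← mul_assoc,
      ← mul_assoc, ybGen_mul_ybGen]

variable {Φ : ι → ybAlgebra k op bl ≃ₐ[k] ybAlgebra k op bl}
  {hΦ : ∀ s x, Φ s (ybGen k op bl x) = ybGen k op bl (φ s x)}
  {hΦcomm : ∀ s t a, Φ s (Φ t a) = Φ t (Φ s a)} {h : IsIsotope deg φ op bl op' bl'}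

theorem twistedAction_ybGen (x : X) (c : ybAlgebra k op bl) :
    twistedAction Φ hΦ hΦcomm h (ybGen k op' bl' x) c = ybGen k op bl x * Φ (deg x) c := by
  rw [twistedAction, lift_ybGen]
  rfl

variable (Φ hΦ hΦcomm h) in
noncomputable def twistMap : ybAlgebra k op' bl' →ₗ[k] ybAlgebra k op bl :=
  LinearMap.applyₗ 1 ∘ₗ (twistedAction Φ hΦ hΦcomm h).toLinearMap

theorem twistMap_apply (b : ybAlgebra k op' bl') :
    twistMap Φ hΦ hΦcomm h b = twistedAction Φ hΦ hΦcomm h b 1 :=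
  rfl

theorem twistMap_mul (a b : ybAlgebra k op' bl') :
    twistMap Φ hΦ hΦcomm h (a * b) = twistedAction Φ hΦ hΦcomm h a (twistMap Φ hΦ hΦcomm h b) := by
  simp [twistMap, Module.End.mul_apply]

theorem twistMap_one : twistMap Φ hΦ hΦcomm h 1 = 1 := by
  simp [twistMap]

theorem twistMap_ybGen_mul (x : X) (b : ybAlgebra k op' bl') :
    twistMap Φ hΦ hΦcomm h (ybGen k op' bl' x * b) =
      ybGen k op bl x * Φ (deg x) (twistMap Φ hΦ hΦcomm h b) := by
  rw [twistMap_mul, twistedAction_ybGen]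

theorem twistMap_ybGen (x : X) : twistMap Φ hΦ hΦcomm h (ybGen k op' bl' x) = ybGen k op bl x := by
  simpa [twistMap_one] using twistMap_ybGen_mul (Φ := Φ) (hΦ := hΦ) (hΦcomm := hΦcomm) (h := h) x 1

theorem twistMap_map (hdeg : ∀ s x, deg (φ s x) = deg x) {s : ι}
    (Ψ : ybAlgebra k op' bl' →ₐ[k] ybAlgebra k op' bl')
    (hΨ : ∀ x, Ψ (ybGen k op' bl' x) = ybGen k op' bl' (φ s x)) (b : ybAlgebra k op' bl') :
    twistMap Φ hΦ hΦcomm h (Ψ b) = Φ s (twistMap Φ hΦ hΦcomm h b) := by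
  have hcomp := comp_eq_comp_of_ybGen (twistedAction Φ hΦ hΦcomm h)
    ((twistedAction Φ hΦ hΦcomm h).comp Ψ) (Φ s).toLinearMap (fun x => by
      ext c
      simp [twistedAction_ybGen, hΨ, hΦ, hdeg, hΦcomm]) b
  simpa [twistMap] using (LinearMap.congr_fun hcomp 1).symm

theorem twistMap_twistMap {Φ' : ι → ybAlgebra k op' bl' ≃ₐ[k] ybAlgebra k op' bl'} {φ' : ι → X ≃ X}
    {hΦ' : ∀ s x, Φ' s (ybGen k op' bl' x) = ybGen k op' bl' (φ' s x)}
    {hΦ'comm : ∀ s t a, Φ' s (Φ' t a) = Φ' t (Φ' s a)} {h' : IsIsotope deg φ' op' bl' op bl}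
    (hcompat : ∀ s c, Φ' s (twistMap Φ' hΦ' hΦ'comm h' (Φ s c)) = twistMap Φ' hΦ' hΦ'comm h' c)
    (b : ybAlgebra k op' bl') :
    twistMap Φ' hΦ' hΦ'comm h' (twistMap Φ hΦ hΦcomm h b) = b := by
  have hcomp := comp_eq_comp_of_ybGen (twistedAction Φ hΦ hΦcomm h) (Algebra.lmul k _)
    (twistMap Φ' hΦ' hΦ'comm h') (fun x => by
      ext c
      simp [twistedAction_ybGen, twistMap_ybGen_mul, hcompat]) b
  simpa [twistMap_one, ← twistMap_apply] using LinearMap.congr_fun hcomp 1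

end ZhangTwist

theorem isotope_algebra_iso_zhang_twist_general
    (k : Type*) [Field k] {X : Type*} {p : ℕ}
    (op bs bl : X → X → X) (deg : X → Fin p)
    (hl1 : ∀ x y, op x (bs x y) = y) (hl2 : ∀ x y, bs x (op x y) = y)
    (hi1 : ∀ x y, op (op x y) (bl x y) = x)
    (hgr1 : ∀ x y, deg (op x y) = deg y) (hgr2 : ∀ x y, deg (bl y x) = deg y)
    (φ : Fin p → X ≃ X)
    (haut : ∀ s x y, φ s (op x y) = op (φ s x) (φ s y))
    (hdegpres : ∀ s x, deg (φ s x) = deg x)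
    (hcomm : ∀ s t x, φ s (φ t x) = φ t (φ s x))
    -- the graded algebra automorphisms Φ_s of A induced by the φ_s
    (Φ : Fin p → (ybAlgebra k op bl ≃ₐ[k] ybAlgebra k op bl))
    (hΦ : ∀ s x, Φ s (ybGen k op bl x) = ybGen k op bl (φ s x))
    (hΦcomm : ∀ s t a, Φ s (Φ t a) = Φ t (Φ s a)) :
    -- the isotope operations
    letI star : X → X → X := fun x y => op x (φ (deg x) y)
    letI bsStar : X → X → X := fun x y => (φ (deg x)).symm (bs x y)
    letI diamond : X → X → X := fun x y => bsStar (star x y) x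
    -- A* ≅ A^φ as ℕ^p-graded algebras
    ∃ T : ybAlgebra k star diamond ≃ₗ[k] ybAlgebra k op bl,
      T 1 = 1 ∧
      (∀ x : X, T (ybGen k star diamond x) = ybGen k op bl x) ∧
      (∀ (x : X) (b : ybAlgebra k star diamond),
        T (ybGen k star diamond x * b) = ybGen k op bl x * Φ (deg x) (T b)) := by
  let star := isotopeOp deg φ op
  let diamond := isotopeBl deg φ op bs
  change ∃ T : ybAlgebra k star diamond ≃ₗ[k] ybAlgebra k op bl,
    T 1 = 1 ∧ (∀ x, T (ybGen k star diamond x) = ybGen k op bl x) ∧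
      ∀ x b, T (ybGen k star diamond x * b) = ybGen k op bl x * Φ (deg x) (T b)
  have hiso : IsIsotope deg φ op bl star diamond :=
    isIsotope_isotopeOp_isotopeBl hl2 hi1 hgr1 hgr2 hdegpres
  have hiso' : IsIsotope deg (fun s => (φ s).symm) star diamond op bl :=
    hiso.symm hdegpres hgr1 fun x y => hgr2 y x
  let Ψ s := ybAlgebra.mapEquiv (k := k) (φ s) (isotopeOp_map haut hdegpres hcomm s)
      (isotopeBl_map hl1 hl2 haut hdegpres hcomm s)
  have hΨ s x : Ψ s (ybGen k _ _ x) = ybGen k _ _ (φ s x) :=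
    ybAlgebra.mapEquiv_ybGen _ _ _ x
  let T := twistMap Φ hΦ hΦcomm hiso
  let S := twistMap (fun s => (Ψ s).symm) (fun s => ybAlgebra.symm_ybGen (Ψ s) (hΨ s))
    (fun s t => ybAlgebra.comm_of_ybGen (ybAlgebra.symm_ybGen (Ψ s) (hΨ s))
      (ybAlgebra.symm_ybGen (Ψ t) (hΨ t)) (symm_apply_symm_apply_comm hcomm s t)) hiso'
  have hTΨ s b : T (Ψ s b) = Φ s (T b) := twistMap_map hdegpres (Ψ s : _ →ₐ[k] _) (hΨ s) b
  have hSΦ s c : S ((Φ s).symm c) = (Ψ s).symm (S c) :=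
    twistMap_map (deg_symm_apply hdegpres) ((Φ s).symm : ybAlgebra k op bl →ₐ[k] ybAlgebra k op bl)
      (ybAlgebra.symm_ybGen (Φ s) (hΦ s)) c
  refine ⟨LinearEquiv.ofLinearMap (f := T) (g := S)
    (LinearMap.ext fun c => twistMap_twistMap (fun s b => ?_) c)
    (LinearMap.ext fun b => twistMap_twistMap (fun s c => ?_) b), twistMap_one,
    twistMap_ybGen, twistMap_ybGen_mul⟩
  · rw [← hTΨ, AlgEquiv.apply_symm_apply]
  · rw [← hSΦ, AlgEquiv.symm_apply_apply]

/-- The Yang–Baxter algebra `A*` of the φ-isotope of an ℕ^p-graded involutive birack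
satisfying condition lri is isomorphic, as an ℕ^p-graded algebra, to the Zhang twist
`A^φ` of the Yang–Baxter algebra `A` of the original birack: there is a `k`-linear
equivalence `T : A* → A` which is the identity on the generators `X` (hence degree
preserving, since both algebras are graded by the generators) and transforms the
multiplication of `A*` into the Zhang-twisted multiplication `a ⋆ b = a · Φ^{|a|}(b)`. -/
theorem isotope_algebra_iso_zhang_twist
    (k : Type*) [Field k] {X : Type*} {p : ℕ} [Fintype X]
    (op bs bl rd : X → X → X) (deg : X → Fin p)
    (hl1 : ∀ x y, op x (bs x y) = y) (hl2 : ∀ x y, bs x (op x y) = y)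
    (hr1 : ∀ x y, bl (rd y x) x = y) (hr2 : ∀ x y, rd (bl y x) x = y)
    (hb1 : ∀ x y z, op x (op y z) = op (op x y) (op (bl x y) z))
    (hb2 : ∀ x y z, bl (op x y) (op (bl x y) z) = op (bl x (op y z)) (bl y z))
    (hb3 : ∀ x y z, bl (bl x y) z = bl (bl x (op y z)) (bl y z))
    (hi1 : ∀ x y, op (op x y) (bl x y) = x)
    (hi2 : ∀ x y, bl (op x y) (bl x y) = y)
    (hgr1 : ∀ x y, deg (op x y) = deg y) (hgr2 : ∀ x y, deg (bl y x) = deg y)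
    (hlri1 : ∀ x y, bl (op x y) x = y) (hlri2 : ∀ x y, op x (bl y x) = y)
    (φ : Fin p → X ≃ X)
    (haut : ∀ s x y, φ s (op x y) = op (φ s x) (φ s y))
    (hdegpres : ∀ s x, deg (φ s x) = deg x)
    (hcomm : ∀ s t x, φ s (φ t x) = φ t (φ s x))
    (hL : ∀ s x a, op (φ s x) a = op x a)
    -- the graded algebra automorphisms Φ_s of A induced by the φ_s
    (Φ : Fin p → (ybAlgebra k op bl ≃ₐ[k] ybAlgebra k op bl))
    (hΦ : ∀ s x, Φ s (ybGen k op bl x) = ybGen k op bl (φ s x))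
    (hΦcomm : ∀ s t a, Φ s (Φ t a) = Φ t (Φ s a)) :
    -- the isotope operations
    letI star : X → X → X := fun x y => op x (φ (deg x) y)
    letI bsStar : X → X → X := fun x y => (φ (deg x)).symm (bs x y)
    letI diamond : X → X → X := fun x y => bsStar (star x y) x
    -- A* ≅ A^φ as ℕ^p-graded algebras
    ∃ T : ybAlgebra k star diamond ≃ₗ[k] ybAlgebra k op bl,
      T 1 = 1 ∧
      (∀ x : X, T (ybGen k star diamond x) = ybGen k op bl x) ∧
      (∀ (x : X) (b : ybAlgebra k star diamond),
        T (ybGen k star diamond x * b) = ybGen k op bl x * Φ (deg x) (T b)) :=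
  isotope_algebra_iso_zhang_twist_general k op bs bl deg hl1 hl2 hi1 hgr1 hgr2 φ haut hdegpres hcomm
    Φ hΦ hΦcomm
end

section
/- An involutive birack (X, ∘, \_∘, •, /_•) is distributive (i.e., x∘(y∘z) = (x∘y)∘(x∘z) and (y•z)•x = (y•x)•(z•x) for all x,y,z) if and only if L_x L_y = L_{x∘y} L_x for all x, y ∈ X, where L_x(a) = x ∘ a. -/
/-- An involutive birack is distributive iff `L_x L_y = L_{x∘y} L_x` for all `x, y`. -/
theorem distributive_iff {X : Type*}
    (op bs bl rd : X → X → X)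
    (hl1 : ∀ x y, op x (bs x y) = y) (hl2 : ∀ x y, bs x (op x y) = y)
    (hr1 : ∀ x y, bl (rd y x) x = y) (hr2 : ∀ x y, rd (bl y x) x = y)
    (hb1 : ∀ x y z, op x (op y z) = op (op x y) (op (bl x y) z))
    (hb2 : ∀ x y z, bl (op x y) (op (bl x y) z) = op (bl x (op y z)) (bl y z))
    (hb3 : ∀ x y z, bl (bl x y) z = bl (bl x (op y z)) (bl y z))
    (hi1 : ∀ x y, op (op x y) (bl x y) = x)
    (hi2 : ∀ x y, bl (op x y) (bl x y) = y) :
    ((∀ x y z, op x (op y z) = op (op x y) (op x z)) ∧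
     (∀ x y z, bl (bl y z) x = bl (bl y x) (bl z x))) ↔
      (∀ x y a, op x (op y a) = op (op x y) (op x a)) := by
  constructor
  · exact fun h x y a => h.1 x y a
  · intro D
    have cancel : ∀ t a b, op t a = op t b → a = b := fun t a b h => by
      have h2 := congrArg (bs t) h
      rwa [hl2, hl2] at h2
    have B : ∀ x y, bl x y = bs (op x y) x := fun x y => by
      have h := congrArg (bs (op x y)) (hi1 x y)
      rwa [hl2] at h
    have A' : ∀ x u v, op x (bs u v) = bs (op x u) (op x v) := fun x u v => by
      have h : op (op x u) (op x (bs u v)) = op x v := by rw [← D, hl1]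
      have h2 := congrArg (bs (op x u)) h
      rwa [hl2] at h2
    have K : ∀ x y z, op (bl x y) z = op x z := fun x y z => by
      apply cancel (op x y)
      rw [← hb1, D]
    have K' : ∀ a x z, op (bs a x) z = op x z := fun a x z => by
      have h := K x (bs x a) z
      rwa [B, hl1] at h
    have Kop : ∀ u v z, op (op v u) z = op u z := fun u v z => by
      have h := K' v (op v u) z
      rw [hl2] at h; exact h.symm
    have Sop : ∀ u v y, bs (op v u) y = bs u y := fun u v y => by
      apply cancel u
      have h1 : op u (bs (op v u) y) = y := by rw [← Kop u v, hl1]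
      rw [h1, hl1]
    have key : ∀ u v y, bs u (bs v y) = bs (bs (op v u) v) (bs u y) := fun u v y => by
      apply cancel (bs (op v u) v)
      rw [hl1, K', A', hl1, Sop]
    refine ⟨D, fun x y z => ?_⟩
    have L1 : bl (bl y z) x = bs (op y x) (bs (op y z) y) := by
      rw [B (bl y z) x, K y z x, B y z]
    have R1 : bl (bl y x) (bl z x) = bs (bs (op (op y z) (op y x)) (op y z)) (bs (op y x) y) := by
      rw [B (bl y x) (bl z x), K y x (bl z x), B z x, A' y (op z x) z, D y z x, B y x]
    rw [L1, R1, key]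
end

section
/- Let (X, ∘, \_∘, •, /_•) be an involutive distributive birack. Then it is 2-reductive, i.e., (x ∘ y) ∘ z = y ∘ z for all x, y, z ∈ X (equivalently L_{L_x(y)} = L_y), and the relation x ∼ y ⟺ L_x = L_y is an equivalence relation whose classes are invariant under all left translations, i.e., x ∼ L_z(x) for all x, z ∈ X. -/
/-- An involutive distributive birack is 2-reductive: `(x ∘ y) ∘ z = y ∘ z`, and hence
`x ∼ L_z(x)` for the equivalence `x ∼ y ⟺ L_x = L_y`, so every left translation maps
each equivalence class into itself. -/
theorem distributive_is_two_reductive {X : Type*}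
    (op bs bl rd : X → X → X)
    (hl1 : ∀ x y, op x (bs x y) = y) (hl2 : ∀ x y, bs x (op x y) = y)
    (hr1 : ∀ x y, bl (rd y x) x = y) (hr2 : ∀ x y, rd (bl y x) x = y)
    (hb1 : ∀ x y z, op x (op y z) = op (op x y) (op (bl x y) z))
    (hb2 : ∀ x y z, bl (op x y) (op (bl x y) z) = op (bl x (op y z)) (bl y z))
    (hb3 : ∀ x y z, bl (bl x y) z = bl (bl x (op y z)) (bl y z))
    (hi1 : ∀ x y, op (op x y) (bl x y) = x)
    (hi2 : ∀ x y, bl (op x y) (bl x y) = y)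
    (hd1 : ∀ x y z, op x (op y z) = op (op x y) (op x z))
    (hd2 : ∀ x y z, bl (bl y z) x = bl (bl y x) (bl z x)) :
    (∀ x y z, op (op x y) z = op y z) ∧
    (∀ x z, (fun a => op (op z x) a) = (fun a => op x a)) := by
  have key : ∀ x y z, op (bl x y) z = op x z := by
    intro x y z
    have h : op (op x y) (op (bl x y) z) = op (op x y) (op x z) :=
      (hb1 x y z).symm.trans (hd1 x y z)
    have := congrArg (bs (op x y)) h
    rwa [hl2, hl2] at this
  have main : ∀ x y z, op (op x y) z = op y z := by
    intro x y z
    calc op (op x y) z = op (bl (op x y) (bl x y)) z := (key _ _ _).symm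
      _ = op y z := by rw [hi2]
  exact ⟨main, fun x z => funext fun a => main z x a⟩
end

section
/- Let (X, ∘, \_∘, •, /_•) be a finite involutive distributive birack, graded by the partition of X into classes X₁,…,X_p of the equivalence x ∼ y ⟺ L_x = L_y, with representatives x_s ∈ X_s and φ_s = L_{x_s}^{-1}. Then the φ-isotope (X, *, \_*, ⋄, /_⋄) is the projection birack: x * y = y for all x, y ∈ X (all left and right translations are the identity). -/
/-- For a finite involutive distributive birack graded by the classes of the equivalence
`x ∼ y ⟺ L_x = L_y`, with representatives `x_s` and `φ_s = L_{x_s}⁻¹`, the φ-isotope is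
the projection birack: `x * y = y` and `x ⋄ y = x` for all `x, y` (all left and right
translations are the identity). Here `φ_s = L_{x_s}⁻¹` is the map `a ↦ x_s \_∘ a`, so
`x * y = x ∘ (x_{deg x} \_∘ y)`, `x \_* y = x_{deg x} ∘ (x \_∘ y)` and
`x ⋄ y = (x * y) \_* x`. -/
theorem distributive_isotope_is_projection {X : Type*} {p : ℕ} [Fintype X]
    (op bs bl rd : X → X → X)
    (hl1 : ∀ x y, op x (bs x y) = y) (hl2 : ∀ x y, bs x (op x y) = y)
    (hr1 : ∀ x y, bl (rd y x) x = y) (hr2 : ∀ x y, rd (bl y x) x = y)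
    (hb1 : ∀ x y z, op x (op y z) = op (op x y) (op (bl x y) z))
    (hb2 : ∀ x y z, bl (op x y) (op (bl x y) z) = op (bl x (op y z)) (bl y z))
    (hb3 : ∀ x y z, bl (bl x y) z = bl (bl x (op y z)) (bl y z))
    (hi1 : ∀ x y, op (op x y) (bl x y) = x)
    (hi2 : ∀ x y, bl (op x y) (bl x y) = y)
    (hd1 : ∀ x y z, op x (op y z) = op (op x y) (op x z))
    (hd2 : ∀ x y z, bl (bl y z) x = bl (bl y x) (bl z x))
    -- grading by the equivalence classes of x ∼ y ⟺ L_x = L_y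
    (deg : X → Fin p)
    (hdeg : ∀ x y, deg x = deg y ↔ (∀ a, op x a = op y a))
    -- representatives x_s of the classes
    (xs : Fin p → X) (hxs : ∀ s, deg (xs s) = s) :
    letI star : X → X → X := fun x y => op x (bs (xs (deg x)) y)
    letI bsStar : X → X → X := fun x y => op (xs (deg x)) (bs x y)
    letI diamond : X → X → X := fun x y => bsStar (star x y) x
    (∀ x y, star x y = y) ∧ (∀ x y, diamond x y = x) := by
  have key : ∀ x a, op x a = op (xs (deg x)) a := by
    intro x a
    exact ((hdeg x (xs (deg x))).mp (by rw [hxs]) a)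
  have hstar : ∀ x y, op x (bs (xs (deg x)) y) = y := by
    intro x y
    rw [key x, hl1]
  refine ⟨hstar, ?_⟩
  intro x y
  show op (xs (deg (op x (bs (xs (deg x)) y)))) (bs (op x (bs (xs (deg x)) y)) x) = x
  rw [hstar x y, ← key y, hl1]
end
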